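/- Let S ⊆ F be a set of n distinct points and f, F ∈ F[x] nonvanishing on S, and let k < n. Then the codes {(h(s)/f(s))_{s∈S} : deg h < k} and {(h(s)/F(s))_{s∈S} : deg h < k} are equal if and only if F = λ f for some nonzero constant λ ∈ F. -/
import Mathlib

/-- The generalized Reed–Solomon code `GRS(S,k,g) = {(h(sᵢ)/g(sᵢ))ᵢ : deg h < k}`. -/
def GRSset (𝔽 : Type*) [Field 𝔽] (n k : ℕ) (s : Fin n → 𝔽) (g : Polynomial 𝔽) :
    Set (Fin n → 𝔽) :=
  {c | ∃ h : Polynomial 𝔽, h.degree < (k : WithBot ℕ) ∧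
      ∀ i, c i = h.eval (s i) / g.eval (s i)}

open Polynomial in
/-- For `S` of `n` distinct points, `f, F` nonvanishing on `S` of degree `< n`, and
`1 ≤ k < n`: the codes `{(h(s)/f(s))ₛ : deg h < k}` and `{(h(s)/F(s))ₛ : deg h < k}`
are equal iff `F = λ f` for some nonzero constant `λ`. -/
theorem stmt_17 {𝔽 : Type*} [Field 𝔽] [Fintype 𝔽] (n k : ℕ)
    (hk1 : 1 ≤ k) (hkn : k < n)
    (s : Fin n → 𝔽) (hs : Function.Injective s)
    (f F : Polynomial 𝔽)
    (hf : ∀ i, f.eval (s i) ≠ 0) (hF : ∀ i, F.eval (s i) ≠ 0)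
    (hdf : f.natDegree < n) (hdF : F.natDegree < n) :
    GRSset 𝔽 n k s f = GRSset 𝔽 n k s F ↔
      ∃ lam : 𝔽, lam ≠ 0 ∧ F = Polynomial.C lam * f := by
  constructor
  · intro heq
    -- the vector (1/f(sᵢ)) lies in GRS(f), hence in GRS(F)
    have h0k : (0 : WithBot ℕ) < (k : WithBot ℕ) := by exact_mod_cast hk1
    have mem1 : (fun i => (1 : 𝔽[X]).eval (s i) / f.eval (s i)) ∈ GRSset 𝔽 n k s F := by
      rw [← heq]
      exact ⟨1, by simpa using h0k, fun i => rfl⟩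
    obtain ⟨h₁, hd₁, he₁⟩ := mem1
    -- F(sᵢ) = h₁(sᵢ) * f(sᵢ)
    have key : ∀ i, F.eval (s i) = h₁.eval (s i) * f.eval (s i) := by
      intro i
      have h2 := he₁ i
      simp only [eval_one] at h2
      rw [div_eq_div_iff (hf i) (hF i)] at h2
      linear_combination h2
    have hn2 : 2 ≤ n := by omega
    have h₁ne : h₁ ≠ 0 := by
      intro h
      have := key ⟨0, by omega⟩
      rw [h] at this
      simp at this
      exact hF ⟨0, by omega⟩ this
    have hd₁' : h₁.natDegree < k := (natDegree_lt_iff_degree_lt h₁ne).2 hd₁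
    -- h₁ is constant
    have hdeg0 : h₁.natDegree = 0 := by
      by_contra hd0
      set d := h₁.natDegree with hd
      have hd1 : 1 ≤ d := Nat.one_le_iff_ne_zero.2 hd0
      set j := k - d with hj
      have hjd : j + d = k := by omega
      have memj : (fun i => ((X : 𝔽[X]) ^ j).eval (s i) / f.eval (s i)) ∈ GRSset 𝔽 n k s F := by
        rw [← heq]
        refine ⟨X ^ j, ?_, fun i => rfl⟩
        rw [degree_X_pow]
        exact_mod_cast (by omega : j < k)
      obtain ⟨h₂, hd₂, he₂⟩ := memj
      have hXj : (X ^ j * h₁ : 𝔽[X]).natDegree = k := by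
        rw [natDegree_mul (pow_ne_zero _ X_ne_zero) h₁ne, natDegree_X_pow, hjd]
      have h₂ne : h₂ ≠ X ^ j * h₁ := by
        intro h
        have hne : h₂ ≠ 0 := by
          rw [h]; exact mul_ne_zero (pow_ne_zero _ X_ne_zero) h₁ne
        have hlt : h₂.natDegree < k := (natDegree_lt_iff_degree_lt hne).2 hd₂
        rw [h, hXj] at hlt
        omega
      set p := h₂ - X ^ j * h₁ with hp
      have pne : p ≠ 0 := sub_ne_zero.2 h₂ne
      have hd₂' : h₂.natDegree < k := by
        rcases eq_or_ne h₂ 0 with h | h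
        · rw [h, natDegree_zero]; omega
        · exact (natDegree_lt_iff_degree_lt h).2 hd₂
      have pdeg : p.natDegree < n := by
        refine lt_of_le_of_lt (natDegree_sub_le _ _) ?_
        rw [hXj]
        simp only [sup_lt_iff]
        omega
      have proots : ∀ i, p.eval (s i) = 0 := by
        intro i
        have h2 := he₂ i
        simp only [eval_pow, eval_X] at h2
        rw [div_eq_div_iff (hf i) (hF i)] at h2
        have h4 := key i
        have hz : (h₂.eval (s i) - (s i) ^ j * h₁.eval (s i)) * f.eval (s i) = 0 := by
          linear_combination (s i) ^ j * h4 - h2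
        rcases mul_eq_zero.1 hz with h | h
        · rw [hp]
          simp only [eval_sub, eval_mul, eval_pow, eval_X]
          exact h
        · exact absurd h (hf i)
      exact pne (p.eq_zero_of_natDegree_lt_card_of_eval_eq_zero hs proots
        (by simpa using pdeg))
    obtain ⟨lam, rfl⟩ := natDegree_eq_zero.1 hdeg0
    have hlam : lam ≠ 0 := fun h => h₁ne (by rw [h, map_zero])
    refine ⟨lam, hlam, ?_⟩
    have : F - C lam * f = 0 := by
      apply Polynomial.eq_zero_of_natDegree_lt_card_of_eval_eq_zero _ hs
      · intro i
        have := key i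
        simp only [eval_sub, eval_mul, eval_C]
        simp only [eval_C] at this
        linear_combination this
      · refine lt_of_le_of_lt (natDegree_sub_le _ _) ?_
        have : (C lam * f).natDegree ≤ f.natDegree := natDegree_mul_le.trans (by simp)
        simp only [Fintype.card_fin, sup_lt_iff]
        omega
    exact sub_eq_zero.1 this
  · rintro ⟨lam, hlam, rfl⟩
    ext c
    simp only [GRSset, Set.mem_setOf_eq]
    constructor
    · rintro ⟨h, hd, he⟩
      refine ⟨C lam * h, ?_, fun i => ?_⟩
      · rwa [degree_C_mul hlam]
      · rw [he i]
        simp only [eval_mul, eval_C]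
        rw [mul_div_mul_left _ _ hlam]
    · rintro ⟨h, hd, he⟩
      refine ⟨C lam⁻¹ * h, ?_, fun i => ?_⟩
      · rwa [degree_C_mul (inv_ne_zero hlam)]
      · rw [he i]
        simp only [eval_mul, eval_C]
        field_simp
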